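/- The function φ(v) := −v / ((1 − v·(cos v/sin v))² + v²) is strictly increasing on the interval (−π, 0). (Since φ(v) = π·f_J(x(v)) where x(v) = 1 − v·cot v + log(v/sin v) is strictly decreasing on (−π, 0), this is the parametrized form of the statement that the density f_J of the random variable J is strictly decreasing on (0, ∞).) -/

import Mathlib

/-!
Write `g v = 1 - v cot v` and `D = g² + v²`, so that `φ = -v / D` and
`φ' = (v D' - D) / D² = (v² + g · (2 v g' - g)) / D²`. Both factors of the product
are positive on `(-π, 0)`: `g > 0` because `v cos v < sin v` on `(0, π)` (tangent inequality), and
`2 v g' - g = (2 v² - v sin v cos v - sin² v) / sin² v > 0` because `|sin v| < |v|`.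
-/

open Real Set

noncomputable def oneSubMulCot (v : ℝ) : ℝ := 1 - v * (cos v / sin v)

lemma oneSubMulCot_neg (v : ℝ) : oneSubMulCot (-v) = oneSubMulCot v := by
  simp only [oneSubMulCot, cos_neg, sin_neg, div_neg, mul_neg, neg_mul, neg_neg]

lemma mul_cos_lt_sin {x : ℝ} (hx₀ : 0 < x) (hx : x < π) : x * cos x < sin x := by
  have hsin : 0 < sin x := sin_pos_of_pos_of_lt_pi hx₀ hx
  rcases le_or_gt (cos x) 0 with hcos | hcos
  · nlinarith
  · have hx2 : x < π / 2 := by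
      by_contra! h
      exact hcos.not_ge (cos_nonpos_of_pi_div_two_le_of_le h (by linarith))
    have := lt_tan hx₀ hx2
    rwa [tan_eq_sin_div_cos, lt_div_iff₀ hcos] at this

lemma oneSubMulCot_pos {v : ℝ} (hv₀ : v ≠ 0) (hv : |v| < π) : 0 < oneSubMulCot v := by
  wlog hpos : 0 < v generalizing v
  · rw [← oneSubMulCot_neg]
    exact this (neg_ne_zero.2 hv₀) (by rwa [abs_neg])
      (neg_pos.2 ((not_lt.1 hpos).lt_of_ne hv₀))
  have hsin : 0 < sin v := sin_pos_of_pos_of_lt_pi hpos (abs_lt.1 hv).2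
  rw [oneSubMulCot, sub_pos, ← mul_div_assoc, div_lt_one hsin]
  exact mul_cos_lt_sin hpos (abs_lt.1 hv).2

lemma hasDerivAt_oneSubMulCot {v : ℝ} (hv : sin v ≠ 0) :
    HasDerivAt oneSubMulCot ((v - sin v * cos v) / sin v ^ 2) v := by
  refine (((hasDerivAt_id' v).mul ((hasDerivAt_cos v).div (hasDerivAt_sin v) hv)).const_sub
    1).congr_deriv ?_
  simp only [Pi.div_apply]
  field_simp
  linear_combination v * sin_sq_add_cos_sq v

lemma oneSubMulCot_lt {v : ℝ} (hv : sin v ≠ 0) :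
    oneSubMulCot v < 2 * v * ((v - sin v * cos v) / sin v ^ 2) := by
  have hv₀ : v ≠ 0 := by rintro rfl; simp at hv
  have hsq : 0 < sin v ^ 2 := by positivity
  have key : 0 < 2 * v ^ 2 - v * sin v * cos v - sin v ^ 2 := by
    nlinarith [sq_nonneg (v * cos v - sin v), sin_sq_lt_sq hv₀,
      mul_le_mul_of_nonneg_left (cos_sq_le_one v) (sq_nonneg v)]
  have hdiff : 2 * v * ((v - sin v * cos v) / sin v ^ 2) - oneSubMulCot v
      = (2 * v ^ 2 - v * sin v * cos v - sin v ^ 2) / sin v ^ 2 := by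
    rw [oneSubMulCot]
    field_simp
    ring
  exact sub_pos.1 (hdiff ▸ div_pos key hsq)

lemma hasDerivAt_neg_div_sq_add_sq {g : ℝ → ℝ} {g' v : ℝ} (hg : HasDerivAt g g' v)
    (hv : v ≠ 0) :
    HasDerivAt (fun v => -v / (g v ^ 2 + v ^ 2))
      ((v ^ 2 + g v * (2 * v * g' - g v)) / (g v ^ 2 + v ^ 2) ^ 2) v := by
  have hD : g v ^ 2 + v ^ 2 ≠ 0 := by positivity
  refine ((hasDerivAt_id' v).neg.fun_div ((hg.fun_pow 2).add (hasDerivAt_pow 2 v))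
    hD).congr_deriv ?_
  simp only [Pi.add_apply, Pi.neg_apply]
  field_simp
  ring

/-- The function `φ(v) = −v/((1 − v·cot v)² + v²)` is strictly increasing on `(−π, 0)`.
Since `φ(v) = π·f_J(x(v))` where `x(v) = 1 − v·cot v + log(v/sin v)` is strictly decreasing
on `(−π, 0)`, this is the parametrized form of the statement that the density `f_J` of the
random variable `J` is strictly decreasing on `(0, ∞)`. -/
theorem phi_strictMono :
    StrictMonoOn
      (fun v : ℝ => -v / ((1 - v * (Real.cos v / Real.sin v)) ^ 2 + v ^ 2))
      (Set.Ioo (-Real.pi) 0) := by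
  change StrictMonoOn (fun v => -v / (oneSubMulCot v ^ 2 + v ^ 2)) (Ioo (-π) 0)
  have hsin : ∀ v ∈ Ioo (-π) 0, sin v ≠ 0 := fun v hv =>
    (sin_neg_of_neg_of_neg_pi_lt hv.2 hv.1).ne
  have hderiv : ∀ v ∈ Ioo (-π) 0, HasDerivAt (fun v => -v / (oneSubMulCot v ^ 2 + v ^ 2))
      ((v ^ 2 + oneSubMulCot v * (2 * v * ((v - sin v * cos v) / sin v ^ 2) - oneSubMulCot v))
        / (oneSubMulCot v ^ 2 + v ^ 2) ^ 2) v := fun v hv =>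
    hasDerivAt_neg_div_sq_add_sq (hasDerivAt_oneSubMulCot (hsin v hv)) hv.2.ne
  refine strictMonoOn_of_hasDerivWithinAt_pos (convex_Ioo _ _)
    (fun v hv => (hderiv v hv).continuousAt.continuousWithinAt)
    (fun v hv => (hderiv v (interior_subset hv)).hasDerivWithinAt) fun v hv => ?_
  rw [interior_Ioo] at hv
  have hg := oneSubMulCot_pos hv.2.ne (abs_lt.2 ⟨hv.1, by linarith [pi_pos, hv.2]⟩)
  have hg' := sub_pos.2 (oneSubMulCot_lt (hsin v hv))
  have hv2 : 0 < v ^ 2 := even_two.pow_pos hv.2.ne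
  positivity
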